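/- Let Σ = {a,ā,b,b̄,c,c̄}, k ≥ 1, m ≥ 1, and L = c·{ā,b̄}*·a^k·ā^k. Every NFA accepting H_k(L,m,m) = ⋃_{v ∈ {ā,b̄}^{≤m−1}} c·v·a^k·ā^k·v̄·c̄ has at least 2^m states. -/

import Mathlib

/-!
Every word of `H_k(L,m,m)` is `c v aᵏ āᵏ v̄ c̄` with `v ∈ {ā,b̄}*` and `|v| < m` (the left
completion contributes nothing, since a word of `L` contains no `c̄`), and such a word is determined
by the part before its first `a`, its number of `ā`s and its tail. Hence the pairs
`(c v aᵏ āᵗ, āᵏ⁻ᵗ v̄ c̄)` with `|v| = m - 1` and `t ≤ k` form a fooling set: a mixed product lies in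
the language only for equal indices. The states reached after the first component on accepting
runs are then pairwise distinct, giving `(k + 1) 2^(m-1) ≥ 2^m` states.
-/

open Computability

/-- Reverse-complement of a word under the involution `bar`. -/
def wbar {S : Type} (bar : S → S) (w : List S) : List S := (w.map bar).reverse

/-- The set of `α`-prefixes of `w` of length at most `ℓ`. -/
def Pa {S : Type} (α w : List S) (ℓ : ℕ) : Language S :=
  {v | v ++ α <+: w ∧ v.length ≤ ℓ}

/-- `α Σ* ᾱ` : words with prefix `α` and suffix `ᾱ`. -/
def Dom {S : Type} (bar : S → S) (α : List S) : Language S :=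
  {z | ∃ β, z = α ++ β ++ wbar bar α}

/-- One-step parameterized hairpin completion with binding word `α`,
left bound `ℓ`, right bound `r`. -/
def HaP {S : Type} (bar : S → S) (α : List S) (ℓ r : ℕ) (L : Language S) : Language S :=
  {z | ∃ γ β, γ.length ≤ ℓ ∧ z = γ ++ α ++ β ++ wbar bar α ++ wbar bar γ ∧
      α ++ β ++ wbar bar α ++ wbar bar γ ∈ L} ⊔
  {z | ∃ γ β, γ.length ≤ r ∧ z = γ ++ α ++ β ++ wbar bar α ++ wbar bar γ ∧
      γ ++ α ++ β ++ wbar bar α ∈ L}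

/-- One-step parameterized hairpin completion `H_k(L,ℓ,r)`. -/
def HkP {S : Type} (bar : S → S) (k ℓ r : ℕ) (L : Language S) : Language S :=
  {z | ∃ α : List S, α.length = k ∧ z ∈ HaP bar α ℓ r L}

def HaIter {S : Type} (bar : S → S) (α : List S) (ℓ r : ℕ) (L : Language S) : ℕ → Language S
  | 0 => L
  | n + 1 => HaP bar α ℓ r (HaIter bar α ℓ r L n)

/-- Iterated parameterized hairpin completion `H_α*(L,ℓ,r)`. -/
def HaStar {S : Type} (bar : S → S) (α : List S) (ℓ r : ℕ) (L : Language S) : Language S :=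
  {z | ∃ n, z ∈ HaIter bar α ℓ r L n}

def HkIter {S : Type} (bar : S → S) (k ℓ r : ℕ) (L : Language S) : ℕ → Language S
  | 0 => L
  | n + 1 => HkP bar k ℓ r (HkIter bar k ℓ r L n)

/-- Iterated parameterized hairpin completion `H_k*(L,ℓ,r)`. -/
def HkStar {S : Type} (bar : S → S) (k ℓ r : ℕ) (L : Language S) : Language S :=
  {z | ∃ n, z ∈ HkIter bar k ℓ r L n}

/-- Unbounded two-sided hairpin completion `H_k(L)`. -/
def HU {S : Type} (bar : S → S) (k : ℕ) (L : Language S) : Language S :=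
  {z | ∃ γ α β, α.length = k ∧ z = γ ++ α ++ β ++ wbar bar α ++ wbar bar γ ∧
      (α ++ β ++ wbar bar α ++ wbar bar γ ∈ L ∨ γ ++ α ++ β ++ wbar bar α ∈ L)}

/-- Unbounded right-sided hairpin completion `RH_k(L)`. -/
def RHU {S : Type} (bar : S → S) (k : ℕ) (L : Language S) : Language S :=
  {z | ∃ γ α β, α.length = k ∧ z = γ ++ α ++ β ++ wbar bar α ++ wbar bar γ ∧
      γ ++ α ++ β ++ wbar bar α ∈ L}

def HUIter {S : Type} (bar : S → S) (k : ℕ) (L : Language S) : ℕ → Language S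
  | 0 => L
  | n + 1 => HU bar k (HUIter bar k L n)

/-- Iterated unbounded two-sided hairpin completion `H_k*(L)`. -/
def HUStar {S : Type} (bar : S → S) (k : ℕ) (L : Language S) : Language S :=
  {z | ∃ n, z ∈ HUIter bar k L n}

def RHUIter {S : Type} (bar : S → S) (k : ℕ) (L : Language S) : ℕ → Language S
  | 0 => L
  | n + 1 => RHU bar k (RHUIter bar k L n)

/-- Iterated unbounded right-sided hairpin completion `RH_k*(L)`. -/
def RHUStar {S : Type} (bar : S → S) (k : ℕ) (L : Language S) : Language S :=
  {z | ∃ n, z ∈ RHUIter bar k L n}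

/-- Image of a language under reverse-complement. -/
def barSet {S : Type} (bar : S → S) (A : Language S) : Language S := wbar bar '' A

/-- The alphabet `Σ = {a, ā, b, b̄, c, c̄}`. -/
inductive HpAb : Type
  | a | abar | b | bbar | c | cbar
deriving DecidableEq

/-- The involution pairing `a ↔ ā`, `b ↔ b̄`, `c ↔ c̄`. -/
def HpAb.inv : HpAb → HpAb
  | .a => .abar
  | .abar => .a
  | .b => .bbar
  | .bbar => .b
  | .c => .cbar
  | .cbar => .c

/-- The language `L = c · {ā,b̄}* · a^k · ā^k`. -/
def LHp (k : ℕ) : Language HpAb :=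
  {z | ∃ v : List HpAb, (∀ x ∈ v, x = HpAb.abar ∨ x = HpAb.bbar) ∧
    z = HpAb.c :: (v ++ List.replicate k HpAb.a ++ List.replicate k HpAb.abar)}

/-- `u^n`: the `n`-fold concatenation of the word `u`. -/
def wpow {S : Type} (u : List S) (n : ℕ) : List S := (List.replicate n u).flatten

namespace NFA

variable {α σ ι : Type*} (M : NFA α σ)

theorem mem_accepts_append_iff {x y : List α} :
    x ++ y ∈ M.accepts ↔ ∃ q ∈ M.eval x, y ∈ M.acceptsFrom {q} := by
  rw [accepts_eq_acceptsFrom_start, append_mem_acceptsFrom]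
  constructor
  · rintro ⟨s, hs, hsx⟩
    obtain ⟨q, hq, hsq⟩ := mem_evalFrom_iff_exists.1 hsx
    exact ⟨q, hq, s, hs, hsq⟩
  · rintro ⟨q, hq, s, hs, hsq⟩
    exact ⟨s, hs, mem_evalFrom_iff_exists.2 ⟨q, hq, hsq⟩⟩

theorem card_le_card_of_fooling [Fintype ι] [Fintype σ] (x y : ι → List α)
    (hacc : ∀ i, x i ++ y i ∈ M.accepts)
    (hfool : ∀ i j, x i ++ y j ∈ M.accepts → x j ++ y i ∈ M.accepts → i = j) :
    Fintype.card ι ≤ Fintype.card σ := by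
  choose q hq hy using fun i => (M.mem_accepts_append_iff).1 (hacc i)
  refine Fintype.card_le_of_injective q fun i j hij => hfool i j ?_ ?_
  · exact M.mem_accepts_append_iff.2 ⟨q j, hij ▸ hq i, hy j⟩
  · exact M.mem_accepts_append_iff.2 ⟨q i, hij ▸ hq j, hy i⟩

end NFA

namespace List

variable {α : Type*} [DecidableEq α]

theorem append_cons_inj_of_notMem_left {x : α} {v u r r' : List α} (hv : x ∉ v) (hu : x ∉ u)
    (h : v ++ x :: r = u ++ x :: r') : v = u ∧ r = r' := by
  have hlen : v.length = u.length := by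
    simpa [idxOf_append_of_notMem hv, idxOf_append_of_notMem hu] using congrArg (idxOf x) h
  obtain ⟨rfl, hr⟩ := append_inj h hlen
  exact ⟨rfl, (cons_inj_right x).1 hr⟩

theorem replicate_append_inj_of_notMem {x : α} {n n' : ℕ} {r r' : List α} (hr : x ∉ r)
    (hr' : x ∉ r') (h : replicate n x ++ r = replicate n' x ++ r') : n = n' ∧ r = r' := by
  have hn : n = n' := by
    simpa [count_replicate_self, count_eq_zero_of_not_mem hr, count_eq_zero_of_not_mem hr']
      using congrArg (count x) h
  subst hn
  exact ⟨rfl, append_cancel_left h⟩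

end List

namespace HpAb

open List

theorem inv_inv (x : HpAb) : x.inv.inv = x := by
  cases x <;> rfl

theorem wbar_inv_involutive : Function.Involutive (wbar inv) := fun w => by
  simp [wbar, map_reverse, Function.comp_def, inv_inv]

theorem wbar_inv_replicate_a (k : ℕ) : wbar inv (replicate k a) = replicate k abar := by
  simp [wbar, inv]

theorem wbar_inv_cons_c (v : List HpAb) : wbar inv (c :: v) = wbar inv v ++ [cbar] := by
  simp [wbar, inv]

def IsBarWord (v : List HpAb) : Prop := ∀ x ∈ v, x = abar ∨ x = bbar

theorem IsBarWord.a_notMem {v : List HpAb} (hv : IsBarWord v) : a ∉ v := fun h => by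
  rcases hv a h with h | h <;> cases h

theorem IsBarWord.cbar_notMem {v : List HpAb} (hv : IsBarWord v) : cbar ∉ v := fun h => by
  rcases hv cbar h with h | h <;> cases h

theorem IsBarWord.abar_notMem_wbar {v : List HpAb} (hv : IsBarWord v) : abar ∉ wbar inv v := by
  simp only [wbar, mem_reverse, mem_map, not_exists, not_and]
  intro x hx
  rcases hv x hx with rfl | rfl <;> decide

def hairpinWord (k : ℕ) (v : List HpAb) (n : ℕ) (w : List HpAb) : List HpAb :=
  c :: (v ++ replicate k a ++ replicate n abar ++ wbar inv w ++ [cbar])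

theorem hairpinWord_inj {k n n' : ℕ} {v w v' w' : List HpAb} (hk : 1 ≤ k) (hv : IsBarWord v)
    (hw : IsBarWord w) (hv' : IsBarWord v') (hw' : IsBarWord w')
    (h : hairpinWord k v n w = hairpinWord k v' n' w') : v = v' ∧ n = n' ∧ w = w' := by
  obtain ⟨k, rfl⟩ : ∃ j, k = j + 1 := ⟨k - 1, by omega⟩
  simp only [hairpinWord, cons_inj_right, replicate_succ, append_assoc, cons_append] at h
  obtain ⟨hvv', h⟩ := append_cons_inj_of_notMem_left hv.a_notMem hv'.a_notMem h
  have hbar (u : List HpAb) (hu : IsBarWord u) : abar ∉ wbar inv u ++ [cbar] := by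
    simpa using hu.abar_notMem_wbar
  obtain ⟨hn, h⟩ :=
    replicate_append_inj_of_notMem (hbar w hw) (hbar w' hw') (append_cancel_left h)
  exact ⟨hvv', hn, wbar_inv_involutive.injective (append_cancel_right h)⟩

theorem hairpinWord_mem_HkP {k m : ℕ} {v : List HpAb} (hv : IsBarWord v) (hlen : v.length < m) :
    hairpinWord k v k v ∈ HkP inv k m m (LHp k) := by
  refine ⟨replicate k a, length_replicate, Or.inr ⟨c :: v, [], hlen, ?_, v, hv, ?_⟩⟩
  · simp [hairpinWord, wbar_inv_replicate_a, wbar_inv_cons_c]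
  · simp [wbar_inv_replicate_a]

theorem cbar_notMem_of_mem_LHp {k : ℕ} {z : List HpAb} (hz : z ∈ LHp k) : cbar ∉ z := by
  obtain ⟨v, hv, rfl⟩ := hz
  simp only [mem_cons, mem_append, mem_replicate, reduceCtorEq, false_or, and_false, or_false]
  exact IsBarWord.cbar_notMem hv

/-- Such a word would start with `c`, so `ᾱ` would contain `c̄`. -/
theorem append_wbar_notMem_LHp {k : ℕ} {α β γ : List HpAb} (hα : α ≠ []) :
    α ++ β ++ wbar inv α ++ wbar inv γ ∉ LHp k := by
  intro hz
  obtain ⟨x, α, rfl⟩ := exists_cons_of_ne_nil hα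
  have hx : x = c := by
    obtain ⟨v, -, hv⟩ := hz
    simpa using congrArg head? hv
  subst hx
  exact cbar_notMem_of_mem_LHp hz (by simp [wbar_inv_cons_c])

theorem eq_of_append_wbar_eq {k : ℕ} (hk : 1 ≤ k) {α β γ v : List HpAb} (hv : IsBarWord v)
    (hα : α.length = k)
    (h : γ ++ α ++ β ++ wbar inv α = c :: (v ++ replicate k a ++ replicate k abar)) :
    α = replicate k a ∧ γ = c :: v ∧ β = [] := by
  obtain ⟨h, hwα⟩ := append_inj' (h.trans (by simp) :
    γ ++ α ++ β ++ wbar inv α = c :: (v ++ replicate k a) ++ replicate k abar) (by simp [wbar, hα])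
  have hαa : α = replicate k a := by
    rw [← wbar_inv_involutive α, hwα, ← wbar_inv_replicate_a, wbar_inv_involutive]
  subst hαa
  have hγ : a ∉ γ := by
    have := congrArg (count a) h
    simp [count_replicate_self, count_eq_zero_of_not_mem hv.a_notMem] at this
    exact count_eq_zero.1 (by omega)
  obtain ⟨k, rfl⟩ : ∃ j, k = j + 1 := ⟨k - 1, by omega⟩
  have h' : γ ++ a :: (replicate k a ++ β) = (c :: v) ++ a :: replicate k a := by
    simpa [replicate_succ] using h
  obtain ⟨hγv, h⟩ := append_cons_inj_of_notMem_left hγ (by simpa using hv.a_notMem) h'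
  exact ⟨rfl, hγv, by simpa using h⟩

theorem mem_HkP_iff {k m : ℕ} (hk : 1 ≤ k) {z : List HpAb} :
    z ∈ HkP inv k m m (LHp k) ↔ ∃ v, IsBarWord v ∧ v.length < m ∧ z = hairpinWord k v k v := by
  refine ⟨fun ⟨α, hα, hz⟩ => ?_, fun ⟨v, hv, hlen, hz⟩ => hz ▸ hairpinWord_mem_HkP hv hlen⟩
  have hα0 : α ≠ [] := by rintro rfl; simp at hα; omega
  rcases hz with ⟨γ, β, -, -, hz⟩ | ⟨γ, β, hγ, rfl, v, hv, h⟩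
  · exact absurd hz (append_wbar_notMem_LHp hα0)
  obtain ⟨rfl, rfl, rfl⟩ := eq_of_append_wbar_eq hk hv hα h
  refine ⟨v, hv, by simpa using hγ, ?_⟩
  simp [hairpinWord, wbar_inv_replicate_a, wbar_inv_cons_c]

def barWord {n : ℕ} (f : Fin n → Bool) : List HpAb := ofFn fun i => cond (f i) abar bbar

theorem isBarWord_barWord {n : ℕ} (f : Fin n → Bool) : IsBarWord (barWord f) := by
  intro x hx
  obtain ⟨i, rfl⟩ := mem_ofFn.1 hx
  cases f i <;> simp

theorem barWord_injective {n : ℕ} : Function.Injective (barWord (n := n)) := fun f g h =>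
  funext fun i => by
    have := congrFun (ofFn_injective h) i
    cases hf : f i <;> cases hg : g i <;> simp_all

def hairpinPrefix (k : ℕ) (v : List HpAb) (t : ℕ) : List HpAb :=
  c :: (v ++ replicate k a ++ replicate t abar)

def hairpinSuffix (k : ℕ) (w : List HpAb) (t : ℕ) : List HpAb :=
  replicate (k - t) abar ++ wbar inv w ++ [cbar]

theorem hairpinPrefix_append_hairpinSuffix (k t s : ℕ) (v w : List HpAb) :
    hairpinPrefix k v t ++ hairpinSuffix k w s = hairpinWord k v (t + (k - s)) w := by
  simp [hairpinPrefix, hairpinSuffix, hairpinWord, ← append_assoc (replicate t abar)]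

theorem hairpinPrefix_append_hairpinSuffix_mem_HkP_iff {k m t s : ℕ} (hk : 1 ≤ k) (ht : t ≤ k)
    (hs : s ≤ k) {v w : List HpAb} (hv : IsBarWord v) (hw : IsBarWord w) (hlen : v.length < m) :
    hairpinPrefix k v t ++ hairpinSuffix k w s ∈ HkP inv k m m (LHp k) ↔ v = w ∧ t = s := by
  rw [hairpinPrefix_append_hairpinSuffix, mem_HkP_iff hk]
  constructor
  · rintro ⟨u, hu, -, h⟩
    obtain ⟨rfl, hts, rfl⟩ := hairpinWord_inj hk hv hw hu hu h
    exact ⟨rfl, by omega⟩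
  · rintro ⟨rfl, rfl⟩
    exact ⟨v, hv, hlen, by rw [Nat.add_sub_cancel' ht]⟩

theorem card_le_of_accepts_eq_HkP {k n : ℕ} (hk : 1 ≤ k) {σ : Type*} [Fintype σ]
    (M : NFA HpAb σ) (hM : M.accepts = HkP inv k (n + 1) (n + 1) (LHp k)) :
    2 ^ n * (k + 1) ≤ Fintype.card σ := by
  have hmem (p q : (Fin n → Bool) × Fin (k + 1)) :
      hairpinPrefix k (barWord p.1) p.2 ++ hairpinSuffix k (barWord q.1) q.2 ∈ M.accepts ↔
        p = q := by
    rw [hM, hairpinPrefix_append_hairpinSuffix_mem_HkP_iff hk (Fin.is_le _) (Fin.is_le _)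
      (isBarWord_barWord _) (isBarWord_barWord _) (by simp [barWord]),
      barWord_injective.eq_iff, Fin.val_inj, Prod.ext_iff]
  simpa using M.card_le_card_of_fooling (fun p => hairpinPrefix k (barWord p.1) p.2)
    (fun p => hairpinSuffix k (barWord p.1) p.2) (fun p => (hmem p p).2 rfl)
    (fun p q h _ => (hmem p q).1 h)

end HpAb

/-- Every NFA accepting `H_k(L,m,m)` for `L = c·{ā,b̄}*·a^k·ā^k`
has at least `2^m` states. -/
theorem NFA_lower_bound (k m : ℕ) (hk : 1 ≤ k) (hm : 1 ≤ m)
    (σ : Type) [Fintype σ] (M : NFA HpAb σ)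
    (hM : M.accepts = HkP HpAb.inv k m m (LHp k)) :
    2 ^ m ≤ Fintype.card σ := by
  obtain ⟨n, rfl⟩ : ∃ n, m = n + 1 := ⟨m - 1, by omega⟩
  calc 2 ^ (n + 1) = 2 ^ n * 2 := pow_succ 2 n
    _ ≤ 2 ^ n * (k + 1) := by gcongr; omega
    _ ≤ Fintype.card σ := HpAb.card_le_of_accepts_eq_HkP hk M hM
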